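/- Let (P,D) be a MinGMConn instance with complete k-partite demands: P is partitioned into disjoint nonempty sets S₁,…,S_k, all points of P have pairwise distinct y-coordinates, and D consists of exactly the pairs (p,q) with x(p) < x(q) such that p and q lie in different parts. Then there exists a subset P̃ ⊆ P with the following properties, where D̃ denotes the complete k-partite demand set on the partition S₁ ∩ P̃, …, S_k ∩ P̃: (1) every feasible solution Q for (P̃, D̃) is also a feasible solution for (P,D); and (2) |P̃| ≤ 8·IS(P̃, D̃). -/

import Mathlib

abbrev Pt := ℝ × ℝ
abbrev Dem := Pt × Pt

noncomputable section

/-- ℓ1 distance in the plane. -/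
def dist1 (p q : Pt) : ℝ := |p.1 - q.1| + |p.2 - q.2|

/-- Two points are aligned if they are vertically or horizontally aligned. -/
def Aligned (p q : Pt) : Prop := p.1 = q.1 ∨ p.2 = q.2

/-- `p` and `q` are Manhattan-connected in the point set `S`: the Manhattan graph on `S`
contains a rectilinear path from `p` to `q` of total length `‖p - q‖₁`. -/
def MConnected (S : Set Pt) (p q : Pt) : Prop :=
  ∃ (k : ℕ) (f : Fin (k + 1) → Pt),
    f 0 = p ∧ f (Fin.last k) = q ∧ (∀ i, f i ∈ S) ∧
    (∀ i : Fin k, Aligned (f i.castSucc) (f i.succ)) ∧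
    (∑ i : Fin k, dist1 (f i.castSucc) (f i.succ)) = dist1 p q

/-- `Q` is a feasible solution for the instance `(P, D)`. -/
def MFeasible (P : Set Pt) (D : Set Dem) (Q : Set Pt) : Prop :=
  ∀ d ∈ D, MConnected (P ∪ Q) d.1 d.2

/-- Minimum cardinality of a feasible solution. -/
def optN (P : Set Pt) (D : Set Dem) : ℕ :=
  sInf {n | ∃ Q : Finset Pt, MFeasible P D ↑Q ∧ Q.card = n}

/-- The closed axis-aligned rectangle spanned by `p` and `q`. -/
def Rect (p q : Pt) : Set Pt :=
  {z | min p.1 q.1 ≤ z.1 ∧ z.1 ≤ max p.1 q.1 ∧ min p.2 q.2 ≤ z.2 ∧ z.2 ≤ max p.2 q.2}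

/-- The interior of the axis-aligned rectangle spanned by `p` and `q`. -/
def RectInt (p q : Pt) : Set Pt :=
  {z | min p.1 q.1 < z.1 ∧ z.1 < max p.1 q.1 ∧ min p.2 q.2 < z.2 ∧ z.2 < max p.2 q.2}

/-- The four corners of the rectangle spanned by `p` and `q`. -/
def Corners (p q : Pt) : Set Pt := {(p.1, p.2), (p.1, q.2), (q.1, p.2), (q.1, q.2)}

/-- Two demand rectangles are non-conflicting if neither contains a corner of the other
in its interior. -/
def NonConflicting (d e : Dem) : Prop :=
  (∀ c ∈ Corners e.1 e.2, c ∉ RectInt d.1 d.2) ∧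
  (∀ c ∈ Corners d.1 d.2, c ∉ RectInt e.1 e.2)

/-- `IRN D` : maximum cardinality of an independent (pairwise non-conflicting) subset of `D`. -/
def IRN (D : Set Dem) : ℕ :=
  sSup {n | ∃ D' : Finset Dem, ↑D' ⊆ D ∧ D'.card = n ∧
    ∀ d ∈ D', ∀ e ∈ D', d ≠ e → NonConflicting d e}

/-- The vertical segment at `x = a` spanning the `y`-range between `y1` and `y2`. -/
def VSeg (a y1 y2 : ℝ) : Set Pt :=
  {z | z.1 = a ∧ min y1 y2 ≤ z.2 ∧ z.2 ≤ max y1 y2}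

/-- A finite set of demands is vertically separable: its demand rectangles can be ordered
`R₁, …, R_k` with vertical segments `ℓ₁, …, ℓ_k`, where `ℓᵢ` connects the interior of the top
boundary of `Rᵢ` with the interior of its bottom boundary and avoids `R_j` for all `j > i`. -/
def VertSeparable (D' : Finset Dem) : Prop :=
  ∃ (e : Fin D'.card → Dem) (a : Fin D'.card → ℝ),
    Function.Injective e ∧ (∀ i, e i ∈ D') ∧
    (∀ i, min (e i).1.1 (e i).2.1 < a i ∧ a i < max (e i).1.1 (e i).2.1) ∧
    ∀ i j : Fin D'.card, i < j →
      VSeg (a i) (e i).1.2 (e i).2.2 ∩ Rect (e j).1 (e j).2 = ∅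

/-- `VSN D` : maximum cardinality of a vertically separable subset of `D`. -/
def VSN (D : Set Dem) : ℕ :=
  sSup {n | ∃ D' : Finset Dem, ↑D' ⊆ D ∧ D'.card = n ∧ VertSeparable D'}

/-- `λ(p,q)` : the left vertical side of the demand rectangle `R(p,q)`. -/
def LSeg (d : Dem) : Set Pt := VSeg d.1.1 d.1.2 d.2.2

/-- `ρ(p,q)` : the right vertical side of the demand rectangle `R(p,q)`. -/
def RSeg (d : Dem) : Set Pt := VSeg d.2.1 d.1.2 d.2.2

/-- A left boundary independent set: the left sides are pairwise non-overlapping. -/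
def LeftBIS (D' : Finset Dem) : Prop :=
  ∀ d ∈ D', ∀ e ∈ D', d ≠ e → Set.Subsingleton (LSeg d ∩ LSeg e)

/-- A right boundary independent set: the right sides are pairwise non-overlapping. -/
def RightBIS (D' : Finset Dem) : Prop :=
  ∀ d ∈ D', ∀ e ∈ D', d ≠ e → Set.Subsingleton (RSeg d ∩ RSeg e)

/-- `ISN D` : maximum cardinality of a (left or right) boundary independent subset of `D`. -/
def ISN (D : Set Dem) : ℕ :=
  sSup {n | ∃ D' : Finset Dem, ↑D' ⊆ D ∧ D'.card = n ∧ (LeftBIS D' ∨ RightBIS D')}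

/-- `(P, D)` is a MinGMConn instance: demands are between input points, ordered by
`x`-coordinate. -/
def IsInstance (P : Finset Pt) (D : Finset Dem) : Prop :=
  ∀ d ∈ D, d.1 ∈ P ∧ d.2 ∈ P ∧ d.1.1 < d.2.1

/-- The points of `P` have pairwise distinct `x`-coordinates. -/
def DistinctX (P : Finset Pt) : Prop := ∀ p ∈ P, ∀ q ∈ P, p ≠ q → p.1 ≠ q.1

/-- The points of `P` have pairwise distinct `y`-coordinates. -/
def DistinctY (P : Finset Pt) : Prop := ∀ p ∈ P, ∀ q ∈ P, p ≠ q → p.2 ≠ q.2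

end

noncomputable section

/-- The `i`-th open vertical strip determined by boundaries `b` (with `b 0 = ⊥`, `b s = ⊤`). -/
def strip (s : ℕ) (b : Fin (s + 1) → EReal) (i : Fin s) : Set Pt :=
  {z | b i.castSucc < (z.1 : EReal) ∧ (z.1 : EReal) < b i.succ}

/-- `b` describes a strip subdivision into `s` vertical strips via `s - 1` vertical lines,
none of which passes through a point of `P`. -/
def IsStripSubdivision (s : ℕ) (b : Fin (s + 1) → EReal) (P : Finset Pt) : Prop :=
  1 ≤ s ∧ StrictMono b ∧ b 0 = ⊥ ∧ b (Fin.last s) = ⊤ ∧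
    ∀ p ∈ P, ∀ i : Fin (s + 1), (p.1 : EReal) ≠ b i

/-- The projections `π_𝒮(P)` of the points of `P` onto the adjacent strip boundaries. -/
def stripProj (s : ℕ) (b : Fin (s + 1) → EReal) (P : Set Pt) : Set Pt :=
  {z | ∃ p ∈ P, ∃ i : Fin s, p ∈ strip s b i ∧
    ((i.val ≠ 0 ∧ z = ((b i.castSucc).toReal, p.2)) ∨
     (i.val + 1 ≠ s ∧ z = ((b i.succ).toReal, p.2)))}

/-- The demand set `π_𝒮(D)` of the inter-strip instance: demands between points in
different, non-adjacent strips, projected to the adjacent strip boundaries. -/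
def stripDem (s : ℕ) (b : Fin (s + 1) → EReal) (D : Set Dem) : Set Dem :=
  {d | ∃ pq ∈ D, ∃ i j : Fin s,
    pq.1 ∈ strip s b i ∧ pq.2 ∈ strip s b j ∧ i.val + 2 ≤ j.val ∧
    d = (((b i.succ).toReal, pq.1.2), ((b j.castSucc).toReal, pq.2.2))}

/-- `p 0, …, p n` form a triangular instance of size `n` :
`x`-coordinates strictly increasing, while `p 1, …, p n` form a descending diagonal
lying to the top-right of `p 0`. -/
def IsTriangular (n : ℕ) (p : Fin (n + 1) → Pt) : Prop :=
  (∀ i j : Fin (n + 1), i < j → (p i).1 < (p j).1) ∧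
  (∀ i j : Fin (n + 1), i ≠ 0 → i < j → (p j).2 < (p i).2) ∧
  (∀ i : Fin (n + 1), i ≠ 0 → (p 0).2 < (p i).2)

/-- The point set of a triangular instance. -/
def triP (n : ℕ) (p : Fin (n + 1) → Pt) : Finset Pt := Finset.image p Finset.univ

/-- The demand set of a triangular instance: `(p 0, p i)` for `1 ≤ i ≤ n`. -/
def triD (n : ℕ) (p : Fin (n + 1) → Pt) : Finset Dem :=
  Finset.image (fun i => (p 0, p i)) (Finset.univ.filter fun i : Fin (n + 1) => i ≠ 0)

/-- The triangular grid of a triangular instance. -/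
def triGrid (n : ℕ) (p : Fin (n + 1) → Pt) : Set Pt :=
  {z | (∃ i, z.1 = (p i).1) ∧ (∃ j, z.2 = (p j).2) ∧
    ∃ i : Fin (n + 1), i ≠ 0 ∧ z ∈ Rect (p 0) (p i)}

/-- `Q` is arboreally satisfied: for every non-aligned pair of its points, the rectangle
they span contains a third point of `Q`. -/
def ArboreallySatisfied (Q : Finset Pt) : Prop :=
  ∀ p ∈ Q, ∀ q ∈ Q, ¬ Aligned p q → ∃ r ∈ Q, r ≠ p ∧ r ≠ q ∧ r ∈ Rect p q

/-- The Manhattan graph on a finite point set `S`. -/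
def manhattanGraph (S : Finset Pt) : SimpleGraph {x : Pt // x ∈ S} where
  Adj a b := a ≠ b ∧ Aligned a.1 b.1
  symm := ⟨fun _ _ h => ⟨h.1.symm, h.2.imp Eq.symm Eq.symm⟩⟩
  loopless := ⟨fun _ h => h.1 rfl⟩

/-- The demand graph of an instance `(P, D)`. -/
def demandGraph (P : Finset Pt) (D : Finset Dem) : SimpleGraph {x : Pt // x ∈ P} where
  Adj a b := a ≠ b ∧ (((a : Pt), (b : Pt)) ∈ D ∨ ((b : Pt), (a : Pt)) ∈ D)
  symm := ⟨fun _ _ h => ⟨h.1.symm, h.2.symm⟩⟩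
  loopless := ⟨fun _ h => h.1 rfl⟩

/-- `C` is an axis-aligned rectangle: a product of two intervals. -/
def IsAxisRect (C : Set Pt) : Prop :=
  ∃ I J : Set ℝ, I.OrdConnected ∧ J.OrdConnected ∧ C = I ×ˢ J

end

/-! Colour every point by its part, so that demands join points of different colours. Keep a
point `z` if it is *exposed* to a point `w` of another colour in another column: every point of
`z`'s column strictly between the heights of `z` and `w` has the colour of `w`.

For a demand `(p, q)`, the point `r` of `p`'s column of colour different from `q` that is
closest to the height of `q` (and not beyond it) is exposed to `q`; likewise a point `s` of
`q`'s column between the heights of `r` and `q` is exposed to `r`. So `(r, s)` is a sparsified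
demand, and `p → r ⇝ s → q` is a monotone path.

A kept point `z` exposed to `w` has, in the same way, a kept partner of a different colour in
`w`'s column, and the demand between them has a vertical side running along `z`'s column inside
the exposure interval of `z`. At any height, at most two upward and two downward exposure
intervals of one column overlap, as a third one would force a point to be exposed to its own
colour. Greedy interval packing then turns a quarter of the kept points with a partner to the
right (resp. left) into a left (resp. right) boundary independent set. -/

open Finset
open scoped Interval

section ManhattanPaths

lemma MConnected.mono {S T : Set Pt} (h : S ⊆ T) {p q : Pt} (hc : MConnected S p q) :
    MConnected T p q := by
  obtain ⟨k, f, h0, hlast, hS, hal, hlen⟩ := hc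
  exact ⟨k, f, h0, hlast, fun i => h (hS i), hal, hlen⟩

lemma MConnected.cons {S : Set Pt} {p r q : Pt} (hc : MConnected S r q) (hp : p ∈ S)
    (ha : Aligned p r) (hd : dist1 p r + dist1 r q = dist1 p q) : MConnected S p q := by
  obtain ⟨k, f, h0, hlast, hS, hal, hlen⟩ := hc
  have hcs : ∀ j : Fin k, (Fin.cons p f : Fin (k + 2) → Pt) j.succ.castSucc = f j.castSucc :=
    fun j => by rw [← Fin.succ_castSucc, Fin.cons_succ]
  refine ⟨k + 1, Fin.cons p f, Fin.cons_zero _ _, ?_, ?_, ?_, ?_⟩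
  · rw [← Fin.succ_last, Fin.cons_succ, hlast]
  · exact Fin.cases hp fun j => by simpa using hS j
  · refine Fin.cases ?_ fun j => ?_
    · simpa [h0] using ha
    · rw [hcs j, Fin.cons_succ]
      exact hal j
  · simp only [Fin.sum_univ_succ, hcs, Fin.cons_succ, Fin.castSucc_zero, Fin.cons_zero, h0, hlen]
    exact hd

lemma MConnected.snoc {S : Set Pt} {p s q : Pt} (hc : MConnected S p s) (hq : q ∈ S)
    (ha : Aligned s q) (hd : dist1 p s + dist1 s q = dist1 p q) : MConnected S p q := by
  obtain ⟨k, f, h0, hlast, hS, hal, hlen⟩ := hc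
  refine ⟨k + 1, Fin.snoc f q, ?_, by simp, ?_, ?_, ?_⟩
  · rw [← Fin.castSucc_zero, Fin.snoc_castSucc, h0]
  · exact Fin.lastCases (by rw [Fin.snoc_last]; exact hq)
      fun j => by rw [Fin.snoc_castSucc]; exact hS j
  · refine Fin.lastCases ?_ fun j => ?_
    · rw [Fin.snoc_castSucc, Fin.succ_last, Fin.snoc_last, hlast]
      exact ha
    · rw [Fin.snoc_castSucc, Fin.succ_castSucc, Fin.snoc_castSucc]
      exact hal j
  · simp only [Fin.sum_univ_castSucc, Fin.snoc_castSucc, Fin.succ_castSucc, Fin.succ_last,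
      Fin.snoc_last, hlast, hlen]
    exact hd

lemma mem_Rect_iff {p q z : Pt} : z ∈ Rect p q ↔ z.1 ∈ [[p.1, q.1]] ∧ z.2 ∈ [[p.2, q.2]] :=
  ⟨fun ⟨h₁, h₂, h₃, h₄⟩ => ⟨⟨h₁, h₂⟩, h₃, h₄⟩, fun ⟨⟨h₁, h₂⟩, h₃, h₄⟩ => ⟨h₁, h₂, h₃, h₄⟩⟩

lemma dist1_add_dist1_of_mem_Rect {p q r : Pt} (hr : r ∈ Rect p q) :
    dist1 p r + dist1 r q = dist1 p q := by
  have key : ∀ {a b c : ℝ}, c ∈ [[a, b]] → |a - c| + |c - b| = |a - b| := fun hc => by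
    have := dist_add_dist_of_mem_segment (by rwa [segment_eq_uIcc])
    rwa [Real.dist_eq, Real.dist_eq, Real.dist_eq] at this
  rw [mem_Rect_iff] at hr
  simp only [dist1]
  linarith [key hr.1, key hr.2]

lemma MConnected.of_vertical_detour {S : Set Pt} {p q r s : Pt} (h : MConnected S r s)
    (hp : p ∈ S) (hq : q ∈ S) (hr : r.1 = p.1) (hs : s.1 = q.1) (hrpq : r.2 ∈ [[p.2, q.2]])
    (hsrq : s.2 ∈ [[r.2, q.2]]) : MConnected S p q := by
  have hrps : r.2 ∈ [[p.2, s.2]] := by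
    simp only [Set.mem_uIcc] at *
    grind
  have hspq : s.2 ∈ [[p.2, q.2]] := Set.uIcc_subset_uIcc hrpq Set.right_mem_uIcc hsrq
  refine (h.cons hp (Or.inl hr.symm) ?_).snoc hq (Or.inl hs) ?_
  · exact dist1_add_dist1_of_mem_Rect (mem_Rect_iff.mpr ⟨hr ▸ Set.left_mem_uIcc, hrps⟩)
  · exact dist1_add_dist1_of_mem_Rect (mem_Rect_iff.mpr ⟨hs ▸ Set.right_mem_uIcc, hspq⟩)

end ManhattanPaths

section IntervalPacking

variable {ι : Type*}

lemma Finset.card_le_two_of_injOn {β : Type*} [LinearOrder β] {s : Finset ι} {f : ι → β}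
    (hf : Set.InjOn f s) (h : ∀ a ∈ s, ∀ b ∈ s, ∀ c ∈ s, f a < f b → f b < f c → False) :
    #s ≤ 2 := by
  classical
  rw [← card_image_of_injOn hf]
  by_contra! hs
  set t := s.image f
  have ht : t.Nonempty := card_pos.mp (by omega)
  obtain ⟨y, hy⟩ : ((t.erase (t.min' ht)).erase (t.max' ht)).Nonempty := by
    rw [← card_pos, card_erase_of_mem (mem_erase.mpr ⟨?_, t.max'_mem ht⟩),
      card_erase_of_mem (t.min'_mem ht)]
    · omega
    · exact (t.min'_lt_max'_of_card (by omega)).ne'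
  obtain ⟨hyM, hym, hyt⟩ := by simpa only [mem_erase] using hy
  obtain ⟨a, ha, hfa⟩ := mem_image.mp (t.min'_mem ht)
  obtain ⟨b, hb, rfl⟩ := mem_image.mp hyt
  obtain ⟨c, hc, hfc⟩ := mem_image.mp (t.max'_mem ht)
  exact h a ha b hb c hc (hfa ▸ lt_of_le_of_ne (t.min'_le _ hyt) (Ne.symm hym))
    (hfc ▸ lt_of_le_of_ne (t.le_max' _ hyt) hyM)

lemma card_le_two_of_colour_chain {β γ : Type*} [LinearOrder β] {A : Finset ι} {h : ι → β}
    (hinj : Set.InjOn h A) {c g : ι → γ} (hg : ∀ z ∈ A, c z ≠ g z)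
    (hchain : ∀ u ∈ A, ∀ v ∈ A, h u < h v → c v = g u) : #A ≤ 2 :=
  card_le_two_of_injOn hinj fun u hu v hv t ht huv hvt =>
    hg v hv ((hchain u hu v hv huv).trans
      ((hchain u hu t ht (huv.trans hvt)).symm.trans (hchain v hv t ht hvt)))

/-- Greedy packing: keep the interval ending first and discard the intervals of its label meeting
it, which all contain a point just left of its right end. -/
lemma exists_separated_subfamily {κ : Type*} [DecidableEq ι] [DecidableEq κ] (x : ι → κ)
    (l r : ι → ℝ) (m : ℕ) (F : Finset ι) (hlr : ∀ i ∈ F, l i < r i)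
    (hdepth : ∀ x₀ Y, #{i ∈ F | x i = x₀ ∧ l i < Y ∧ Y < r i} ≤ m) :
    ∃ G ⊆ F, #F ≤ m * #G ∧ ∀ i ∈ G, ∀ j ∈ G, i ≠ j → x i ≠ x j ∨ r i ≤ l j ∨ r j ≤ l i := by
  induction F using Finset.strongInduction with
  | H F ih =>
  rcases F.eq_empty_or_nonempty with rfl | hF
  · exact ⟨∅, subset_rfl, by simp, by simp⟩
  obtain ⟨a, haF, hamin⟩ := F.exists_min_image r hF
  set K := {j ∈ F | x j = x a ∧ l j < r a ∧ l a < r j}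
  have haK : a ∈ K := mem_filter.mpr ⟨haF, rfl, hlr a haF, hlr a haF⟩
  obtain ⟨b, hbK, hbmax⟩ := K.exists_max_image l ⟨a, haK⟩
  have hbr : l b < r a := (mem_filter.mp hbK).2.2.1
  have hKm : #K ≤ m := by
    refine (card_le_card fun j hj => ?_).trans (hdepth (x a) ((l b + r a) / 2))
    obtain ⟨hjF, hjx, -⟩ := mem_filter.mp hj
    have := hbmax j hj
    have := hamin j hjF
    exact mem_filter.mpr ⟨hjF, hjx, by linarith, by linarith⟩
  have hKF : K ⊆ F := filter_subset _ _
  obtain ⟨G, hGF, hGcard, hGsep⟩ := ih (F \ K) (sdiff_ssubset hKF ⟨a, haK⟩)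
    (fun i hi => hlr i (mem_sdiff.mp hi).1)
    (fun x₀ Y => (card_le_card (filter_subset_filter _ sdiff_subset)).trans (hdepth x₀ Y))
  have hsep : ∀ j ∈ G, x a ≠ x j ∨ r a ≤ l j ∨ r j ≤ l a := by
    intro j hj
    obtain ⟨hjF, hjK⟩ := mem_sdiff.mp (hGF hj)
    simp only [K, mem_filter, not_and, not_lt] at hjK
    by_cases hx : x a = x j
    · by_cases hl : l j < r a
      · exact Or.inr (Or.inr (hjK hjF hx.symm hl))
      · exact Or.inr (Or.inl (not_lt.mp hl))
    · exact Or.inl hx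
  have haG : a ∉ G := fun h => (mem_sdiff.mp (hGF h)).2 haK
  refine ⟨insert a G, insert_subset haF (hGF.trans sdiff_subset), ?_, ?_⟩
  · have := card_sdiff_add_card_eq_card hKF
    rw [card_insert_of_notMem haG, mul_add_one]
    linarith
  · intro i hi j hj hij
    rcases mem_insert.mp hi with rfl | hiG <;> rcases mem_insert.mp hj with rfl | hjG
    · exact absurd rfl hij
    · exact hsep j hjG
    · rcases hsep i hiG with h | h | h
      · exact Or.inl (Ne.symm h)
      · exact Or.inr (Or.inr h)
      · exact Or.inr (Or.inl h)
    · exact hGsep i hiG j hjG hij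

end IntervalPacking

section Sparsification

variable {γ : Type*}

def ExposedTo (c : Pt → γ) (P : Finset Pt) (z w : Pt) : Prop :=
  ∀ z' ∈ P, z'.1 = z.1 → z'.2 ∈ Set.uIoo z.2 w.2 → c z' = c w

def ExposedToOther (c : Pt → γ) (P : Finset Pt) (z : Pt) : Prop :=
  ∃ w ∈ P, w.1 ≠ z.1 ∧ c w ≠ c z ∧ ExposedTo c P z w

open Classical in
noncomputable def sparsify (c : Pt → γ) (P : Finset Pt) : Finset Pt :=
  {z ∈ P | ExposedToOther c P z}

open Classical in
/-- The complete multipartite demands of `P` for the colouring `c`. -/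
noncomputable def colourDemands (c : Pt → γ) (P : Finset Pt) : Finset Dem :=
  {d ∈ P ×ˢ P | d.1.1 < d.2.1 ∧ c d.1 ≠ c d.2}

lemma mem_colourDemands {c : Pt → γ} {P : Finset Pt} {d : Dem} :
    d ∈ colourDemands c P ↔ d.1 ∈ P ∧ d.2 ∈ P ∧ d.1.1 < d.2.1 ∧ c d.1 ≠ c d.2 := by
  simp only [colourDemands, mem_filter, mem_product, and_assoc]

lemma mem_sparsify {c : Pt → γ} {P : Finset Pt} {z : Pt} :
    z ∈ sparsify c P ↔ z ∈ P ∧ ExposedToOther c P z := by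
  simp only [sparsify, mem_filter]

lemma sparsify_subset (c : Pt → γ) (P : Finset Pt) : sparsify c P ⊆ P :=
  fun _ hz => (mem_sparsify.mp hz).1

/-- Walking along the column of `p` from `p` towards the height of `q`, the last point of colour
different from `q` is exposed to `q`. -/
lemma exists_exposedTo {c : Pt → γ} {P : Finset Pt} {p q : Pt} (hp : p ∈ P) (hpq : c p ≠ c q) :
    ∃ r ∈ P, r.1 = p.1 ∧ r.2 ∈ [[p.2, q.2]] ∧ c r ≠ c q ∧ ExposedTo c P r q := by
  classical
  set T := {z ∈ P | z.1 = p.1 ∧ z.2 ∈ [[p.2, q.2]] ∧ c z ≠ c q}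
  have hpT : p ∈ T := mem_filter.mpr ⟨hp, rfl, Set.left_mem_uIcc, hpq⟩
  obtain ⟨r, hrT, hrmin⟩ := T.exists_min_image (fun z => |z.2 - q.2|) ⟨p, hpT⟩
  obtain ⟨hrP, hrx, hrpq, hrq⟩ := mem_filter.mp hrT
  refine ⟨r, hrP, hrx, hrpq, hrq, fun z hz hzx hzrq => ?_⟩
  by_contra hzq
  have hzT : z ∈ T := mem_filter.mpr ⟨hz, hzx.trans hrx, Set.uIcc_subset_uIcc hrpq
    Set.right_mem_uIcc (Set.uIoo_subset_uIcc_self hzrq), hzq⟩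
  have hcloser : |z.2 - q.2| < |r.2 - q.2| := by
    rcases le_total r.2 q.2 with h | h
    · rw [Set.uIoo_of_le h] at hzrq
      rw [abs_of_nonpos (by linarith [hzrq.2]), abs_of_nonpos (sub_nonpos.mpr h)]
      linarith [hzrq.1]
    · rw [Set.uIoo_of_ge h] at hzrq
      rw [abs_of_nonneg (by linarith [hzrq.1]), abs_of_nonneg (sub_nonneg.mpr h)]
      linarith [hzrq.2]
  exact (hrmin z hzT).not_gt hcloser

theorem MFeasible.of_sparsify {c : Pt → γ} {P : Finset Pt} {Q : Set Pt}
    (hQ : MFeasible ↑(sparsify c P) ↑(colourDemands c (sparsify c P)) Q) :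
    MFeasible ↑P ↑(colourDemands c P) Q := by
  rintro ⟨p, q⟩ hd
  obtain ⟨hp, hq, hx, hpq⟩ := mem_colourDemands.mp hd
  obtain ⟨r, hrP, hrx, hrpq, hrq, hrexp⟩ := exists_exposedTo hp hpq
  obtain ⟨s, hsP, hsx, hsqr, hsr, hsexp⟩ := exists_exposedTo hq hrq.symm
  have hr : r ∈ sparsify c P := mem_sparsify.mpr ⟨hrP, q, hq, hrx ▸ hx.ne', hrq.symm, hrexp⟩
  have hs : s ∈ sparsify c P :=
    mem_sparsify.mpr ⟨hsP, r, hrP, hsx ▸ hrx ▸ hx.ne, hsr.symm, hsexp⟩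
  have hrs : (r, s) ∈ colourDemands c (sparsify c P) :=
    mem_colourDemands.mpr ⟨hr, hs, hrx ▸ hsx ▸ hx, hsr.symm⟩
  refine ((hQ _ hrs).mono (Set.union_subset_union_left _ ?_)).of_vertical_detour
    (Or.inl hp) (Or.inl hq) hrx hsx hrpq (Set.uIcc_comm q.2 r.2 ▸ hsqr)
  exact_mod_cast sparsify_subset c P

end Sparsification

section BoundaryIndependence

lemma VSeg_comm (a y₁ y₂ : ℝ) : VSeg a y₁ y₂ = VSeg a y₂ y₁ := by
  simp only [VSeg, min_comm, max_comm]

lemma VSeg_inter_subsingleton {a a' y₁ y₂ y₃ y₄ : ℝ}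
    (h : a ≠ a' ∨ max y₁ y₂ ≤ min y₃ y₄ ∨ max y₃ y₄ ≤ min y₁ y₂) :
    (VSeg a y₁ y₂ ∩ VSeg a' y₃ y₄).Subsingleton := by
  rintro u ⟨⟨hu₁, hu₂, hu₃⟩, hu₄, hu₅, hu₆⟩ v ⟨⟨hv₁, hv₂, hv₃⟩, -, hv₅, hv₆⟩
  refine Prod.ext (hu₁.trans hv₁.symm) ?_
  rcases h with h | h | h
  · exact absurd (hu₁.symm.trans hu₄) h
  · linarith
  · linarith

lemma card_le_ISN {D' Ds : Finset Dem} (hsub : D' ⊆ Ds) (h : LeftBIS D' ∨ RightBIS D') :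
    #D' ≤ ISN ↑Ds :=
  le_csSup ⟨#Ds, fun _ ⟨_, hE, hcard, _⟩ => hcard ▸ card_le_card (coe_subset.mp hE)⟩
    ⟨D', coe_subset.mpr hsub, rfl, h⟩

lemma card_le_mul_of_vertical_sides {Z : Finset Pt} {t : Pt → Pt} {δ : Pt → Dem}
    {side : Dem → Set Pt} {m n : ℕ} (hnd : ∀ z ∈ Z, z.2 ≠ (t z).2)
    (hdepth : ∀ x₀ Y, #{z ∈ Z | z.1 = x₀ ∧ min z.2 (t z).2 < Y ∧ Y < max z.2 (t z).2} ≤ m)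
    (hδ : Set.InjOn δ Z) (hside : ∀ z ∈ Z, side (δ z) = VSeg z.1 z.2 (t z).2)
    (hn : ∀ G ⊆ Z, (∀ d ∈ G.image δ, ∀ e ∈ G.image δ, d ≠ e → (side d ∩ side e).Subsingleton) →
      #(G.image δ) ≤ n) :
    #Z ≤ m * n := by
  classical
  obtain ⟨G, hGZ, hcard, hsep⟩ := exists_separated_subfamily Prod.fst (fun z => min z.2 (t z).2)
    (fun z => max z.2 (t z).2) m Z (fun z hz => min_lt_max.mpr (hnd z hz)) hdepth
  refine hcard.trans (Nat.mul_le_mul_left m ?_)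
  rw [← card_image_of_injOn (hδ.mono (coe_subset.mpr hGZ))]
  refine hn G hGZ ?_
  simp only [forall_mem_image]
  intro z hz z' hz' hne
  rw [hside z (hGZ hz), hside z' (hGZ hz')]
  exact VSeg_inter_subsingleton (hsep z hz z' hz' fun h => hne (h ▸ rfl))

end BoundaryIndependence

section Counting

variable {γ : Type*}

/-- Of three upward (or downward) exposure intervals through one height, the middle point would be
exposed to its own colour. -/
lemma card_exposure_depth_le_four {c : Pt → γ} {P F : Finset Pt} (hY : DistinctY P)
    (hFP : F ⊆ P) {w : Pt → Pt} (hw : ∀ z ∈ F, c z ≠ c (w z) ∧ ExposedTo c P z (w z))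
    (x₀ Y : ℝ) : #{z ∈ F | z.1 = x₀ ∧ min z.2 (w z).2 < Y ∧ Y < max z.2 (w z).2} ≤ 4 := by
  classical
  set A := {z ∈ F | z.1 = x₀ ∧ z.2 < Y ∧ Y < (w z).2}
  set B := {z ∈ F | z.1 = x₀ ∧ (w z).2 < Y ∧ Y < z.2}
  have hinj : ∀ E ⊆ F, Set.InjOn Prod.snd E := fun E hE u hu v hv huv =>
    by_contra fun hne => hY u (hFP (hE hu)) v (hFP (hE hv)) hne huv
  have hA : #A ≤ 2 := by
    refine card_le_two_of_colour_chain (hinj A (filter_subset _ _)) (g := fun z => c (w z))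
      (fun z hz => (hw z (mem_filter.mp hz).1).1) fun u hu v hv huv => ?_
    obtain ⟨huF, hux, -, hYu⟩ := mem_filter.mp hu
    obtain ⟨hvF, hvx, hvY, -⟩ := mem_filter.mp hv
    exact (hw u huF).2 v (hFP hvF) (hvx.trans hux.symm) (Set.mem_uIoo_of_lt huv (hvY.trans hYu))
  have hB : #B ≤ 2 := by
    refine card_le_two_of_colour_chain (neg_injective.comp_injOn (hinj B (filter_subset _ _)))
      (g := fun z => c (w z)) (fun z hz => (hw z (mem_filter.mp hz).1).1) fun u hu v hv huv => ?_
    obtain ⟨huF, hux, hYu, -⟩ := mem_filter.mp hu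
    obtain ⟨hvF, hvx, -, hvY⟩ := mem_filter.mp hv
    exact (hw u huF).2 v (hFP hvF) (hvx.trans hux.symm)
      (Set.mem_uIoo_of_gt (hYu.trans hvY) (neg_lt_neg_iff.mp huv))
  have hsub : {z ∈ F | z.1 = x₀ ∧ min z.2 (w z).2 < Y ∧ Y < max z.2 (w z).2} ⊆ A ∪ B := by
    intro z hz
    obtain ⟨hzF, hzx, hlo, hhi⟩ := mem_filter.mp hz
    rcases le_total z.2 (w z).2 with h | h
    · rw [min_eq_left h, max_eq_right h] at *
      exact mem_union_left _ (mem_filter.mpr ⟨hzF, hzx, hlo, hhi⟩)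
    · rw [min_eq_right h, max_eq_left h] at *
      exact mem_union_right _ (mem_filter.mpr ⟨hzF, hzx, hlo, hhi⟩)
  calc _ ≤ #(A ∪ B) := card_le_card hsub
    _ ≤ #A + #B := card_union_le _ _
    _ ≤ 4 := by omega

lemma exists_partner_mem_sparsify {c : Pt → γ} {P : Finset Pt} {z : Pt}
    (hz : z ∈ sparsify c P) : ∃ w t, c z ≠ c w ∧ ExposedTo c P z w ∧
      t ∈ sparsify c P ∧ t.1 ≠ z.1 ∧ t.2 ∈ [[z.2, w.2]] ∧ c t ≠ c z := by
  obtain ⟨hzP, w, hwP, hwx, hwz, hexp⟩ := mem_sparsify.mp hz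
  obtain ⟨t, htP, htx, htwz, htz, htexp⟩ := exists_exposedTo hwP hwz
  exact ⟨w, t, hwz.symm, hexp, mem_sparsify.mpr ⟨htP, z, hzP, htx ▸ hwx.symm, htz.symm, htexp⟩,
    htx ▸ hwx, Set.uIcc_comm w.2 z.2 ▸ htwz, htz⟩

theorem card_sparsify_le (c : Pt → γ) {P : Finset Pt} (hY : DistinctY P) :
    #(sparsify c P) ≤ 8 * ISN ↑(colourDemands c (sparsify c P)) := by
  classical
  set Ps := sparsify c P
  have hPsP := sparsify_subset c P
  choose! w t hzw hexp htPs htx hzwt htz using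
    fun z (hz : z ∈ Ps) => exists_partner_mem_sparsify hz
  have hnd : ∀ z ∈ Ps, z.2 ≠ (t z).2 := fun z hz =>
    hY z (hPsP hz) (t z) (hPsP (htPs z hz)) (fun h => htx z hz (h ▸ rfl))
  have hdepth : ∀ Z ⊆ Ps, ∀ x₀ Y,
      #{z ∈ Z | z.1 = x₀ ∧ min z.2 (t z).2 < Y ∧ Y < max z.2 (t z).2} ≤ 4 := by
    intro Z hZ x₀ Y
    refine (card_le_card fun z hz => ?_).trans
      (card_exposure_depth_le_four hY hPsP (fun z hz => ⟨hzw z hz, hexp z hz⟩) x₀ Y)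
    obtain ⟨hzZ, hzx, hzY⟩ := mem_filter.mp hz
    exact mem_filter.mpr ⟨hZ hzZ, hzx, Set.uIoo_subset_Ioo Set.left_mem_uIcc (hzwt z (hZ hzZ)) hzY⟩
  set ZL := {z ∈ Ps | z.1 < (t z).1}
  set ZR := {z ∈ Ps | ¬ z.1 < (t z).1}
  have hZL : ZL ⊆ Ps := filter_subset _ _
  have hZR : ZR ⊆ Ps := filter_subset _ _
  have hL : #ZL ≤ 4 * ISN ↑(colourDemands c Ps) := by
    refine card_le_mul_of_vertical_sides (δ := fun z => (z, t z)) (side := LSeg)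
      (fun z hz => hnd z (hZL hz)) (hdepth ZL hZL) (fun _ _ _ _ h => (Prod.mk.inj h).1)
      (fun _ _ => rfl) fun G hG hind => card_le_ISN ?_ (Or.inl hind)
    simp only [subset_iff, mem_image]
    rintro _ ⟨z, hz, rfl⟩
    obtain ⟨hzPs, hlt⟩ := mem_filter.mp (hG hz)
    exact mem_colourDemands.mpr ⟨hzPs, htPs z hzPs, hlt, (htz z hzPs).symm⟩
  have hR : #ZR ≤ 4 * ISN ↑(colourDemands c Ps) := by
    refine card_le_mul_of_vertical_sides (δ := fun z => (t z, z)) (side := RSeg)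
      (fun z hz => hnd z (hZR hz)) (hdepth ZR hZR) (fun _ _ _ _ h => (Prod.mk.inj h).2)
      (fun _ _ => VSeg_comm _ _ _) fun G hG hind => card_le_ISN ?_ (Or.inr hind)
    simp only [subset_iff, mem_image]
    rintro _ ⟨z, hz, rfl⟩
    obtain ⟨hzPs, hnlt⟩ := mem_filter.mp (hG hz)
    exact mem_colourDemands.mpr ⟨htPs z hzPs, hzPs,
      lt_of_le_of_ne (not_lt.mp hnlt) (htx z hzPs), htz z hzPs⟩
  have hsplit : #ZL + #ZR = #Ps := card_filter_add_card_filter_not _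
  omega

end Counting

section Partitions

variable {k : ℕ} {S : Fin k → Finset Pt}

lemma setOf_mem_eq_singleton (hdisj : ∀ i j, i ≠ j → Disjoint (S i) (S j)) {p : Pt} {i : Fin k}
    (hp : p ∈ S i) : {j | p ∈ S j} = {i} :=
  Set.ext fun j => ⟨fun hj => by_contra fun hji => disjoint_left.mp (hdisj j i hji) hj hp,
    fun hj => (Set.mem_singleton_iff.mp hj) ▸ hp⟩

lemma setOf_mem_ne_iff {P : Finset Pt} (hdisj : ∀ i j, i ≠ j → Disjoint (S i) (S j))
    (hP : (↑P : Set Pt) = ⋃ i, (↑(S i) : Set Pt)) {p q : Pt} (hp : p ∈ P) (hq : q ∈ P) :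
    {i | p ∈ S i} ≠ {i | q ∈ S i} ↔ ∃ i j, i ≠ j ∧ p ∈ S i ∧ q ∈ S j := by
  obtain ⟨i, hi⟩ := Set.mem_iUnion.mp (hP ▸ mem_coe.mpr hp)
  obtain ⟨j, hj⟩ := Set.mem_iUnion.mp (hP ▸ mem_coe.mpr hq)
  rw [mem_coe] at hi hj
  refine ⟨fun hpq => ⟨i, j, fun hij => hpq ?_, hi, hj⟩, ?_⟩
  · rw [setOf_mem_eq_singleton hdisj hi, setOf_mem_eq_singleton hdisj hj, hij]
  · rintro ⟨i', j', hij', hi', hj'⟩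
    rw [setOf_mem_eq_singleton hdisj hi', setOf_mem_eq_singleton hdisj hj']
    exact fun h => hij' (Set.singleton_injective h)

end Partitions

theorem stmt14_general (k : ℕ) (S : Fin k → Finset Pt) (P : Finset Pt) (D : Finset Dem)
    (hdisj : ∀ i j, i ≠ j → Disjoint (S i) (S j))
    (hP : (↑P : Set Pt) = ⋃ i, (↑(S i) : Set Pt))
    (hY : DistinctY P)
    (hD : ∀ d : Dem, d ∈ D ↔
      (d.1 ∈ P ∧ d.2 ∈ P ∧ d.1.1 < d.2.1 ∧ ∃ i j, i ≠ j ∧ d.1 ∈ S i ∧ d.2 ∈ S j)) :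
    ∃ (Ps : Finset Pt) (Ds : Finset Dem),
      Ps ⊆ P ∧
      (∀ d : Dem, d ∈ Ds ↔
        (d.1 ∈ Ps ∧ d.2 ∈ Ps ∧ d.1.1 < d.2.1 ∧ ∃ i j, i ≠ j ∧ d.1 ∈ S i ∧ d.2 ∈ S j)) ∧
      (∀ Q : Finset Pt, MFeasible ↑Ps ↑Ds ↑Q → MFeasible ↑P ↑D ↑Q) ∧
      Ps.card ≤ 8 * ISN ↑Ds := by
  -- the colour of a point is the set of parts containing it, a singleton on `P`
  let c : Pt → Set (Fin k) := fun p => {i | p ∈ S i}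
  have hdemands : ∀ X ⊆ P, ∀ d : Dem, d ∈ colourDemands c X ↔
      (d.1 ∈ X ∧ d.2 ∈ X ∧ d.1.1 < d.2.1 ∧ ∃ i j, i ≠ j ∧ d.1 ∈ S i ∧ d.2 ∈ S j) :=
    fun X hX d => mem_colourDemands.trans <| and_congr_right fun h₁ => and_congr_right fun h₂ =>
      and_congr_right fun _ => setOf_mem_ne_iff hdisj hP (hX h₁) (hX h₂)
  have hD' : D = colourDemands c P := ext fun d => (hD d).trans (hdemands P subset_rfl d).symm
  refine ⟨sparsify c P, colourDemands c (sparsify c P), sparsify_subset c P,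
    hdemands _ (sparsify_subset c P), fun Q hQ => ?_, card_sparsify_le c hY⟩
  exact hD' ▸ hQ.of_sparsify

/-- Sparsification for complete k-partite demands: there is `P̃ ⊆ P` with the
induced complete k-partite demand set `D̃` such that every feasible solution for `(P̃, D̃)` is
feasible for `(P,D)`, and `|P̃| ≤ 8·IS(P̃, D̃)`. -/
theorem stmt14 (k : ℕ) (S : Fin k → Finset Pt) (P : Finset Pt) (D : Finset Dem)
    (hdisj : ∀ i j, i ≠ j → Disjoint (S i) (S j))
    (hne : ∀ i, (S i).Nonempty)
    (hP : (↑P : Set Pt) = ⋃ i, (↑(S i) : Set Pt))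
    (hY : DistinctY P)
    (hD : ∀ d : Dem, d ∈ D ↔
      (d.1 ∈ P ∧ d.2 ∈ P ∧ d.1.1 < d.2.1 ∧ ∃ i j, i ≠ j ∧ d.1 ∈ S i ∧ d.2 ∈ S j)) :
    ∃ (Ps : Finset Pt) (Ds : Finset Dem),
      Ps ⊆ P ∧
      (∀ d : Dem, d ∈ Ds ↔
        (d.1 ∈ Ps ∧ d.2 ∈ Ps ∧ d.1.1 < d.2.1 ∧ ∃ i j, i ≠ j ∧ d.1 ∈ S i ∧ d.2 ∈ S j)) ∧
      (∀ Q : Finset Pt, MFeasible ↑Ps ↑Ds ↑Q → MFeasible ↑P ↑D ↑Q) ∧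
      Ps.card ≤ 8 * ISN ↑Ds :=
  stmt14_general k S P D hdisj hP hY hD
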